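/- arXiv:2511.04794 — 2 statements merged into one kernel-verified Lean document; each statement's English description precedes it below -/
import Mathlib

section
/- Closeness lemma for decision trees: let X ⊆ {0,1}^n be a subcube with free coordinate set F, |F| ≥ 0.1n, and let X' ⊆ X be a subcube with free coordinates F' ⊆ F such that |F∖F'| ≤ δ√n. Let σ be the distribution obtained by sampling u uniformly from X, a uniformly random subset I of F of size √n, and setting coordinates in I to 1. Then Pr_{x∼σ}[x ∈ X'] ≥ (1 - 10δ)·Pr_{u∼X}[u ∈ X']. -/
/-!
For `u ∈ X'` and `I ⊆ F'`, sprinkling `I` keeps `u` in `X'`, so the numerator counts at least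
`|X'| · C(|F'|, s)` good pairs `(u, I)`. It remains to show `C(|F'|, s) ≥ (1 - 10δ) C(|F|, s)`:
an `s`-subset of `F` not inside `F'` contains one of the `|F ∖ F'|` points of `F ∖ F'`, whence
`C(f, s) - C(f', s) ≤ (f - f') C(f - 1, s - 1) = (f - f') (s / f) C(f, s)`, and
`(f - f') s ≤ δ s² = δ n ≤ 10 δ f`.
-/

open Finset

theorem choose_le_choose_add_sub_mul_choose_pred {f' f : ℕ} (s : ℕ) (h : f' ≤ f) :
    f.choose s ≤ f'.choose s + (f - f') * (f - 1).choose (s - 1) := by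
  induction f, h using Nat.le_induction with
  | base => simp
  | succ f hf ih =>
    obtain _ | s := s
    · simp
    have hmono : (f - 1).choose s ≤ f.choose s := Nat.choose_le_choose s (Nat.sub_le f 1)
    rw [Nat.choose_succ_succ, Nat.add_sub_cancel, Nat.sub_add_comm hf, add_one_mul]
    simp only [Nat.add_sub_cancel] at ih ⊢
    nlinarith [Nat.mul_le_mul_left (f - f') hmono]

theorem mul_choose_le_mul_choose_add {f' f : ℕ} (s : ℕ) (h : f' ≤ f) :
    f * f.choose s ≤ f * f'.choose s + s * (f - f') * f.choose s := by
  obtain _ | s := s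
  · simp
  obtain _ | m := f
  · simp
  have hpascal := choose_le_choose_add_sub_mul_choose_pred (s + 1) h
  have hsymm := Nat.add_one_mul_choose_eq m s
  simp only [Nat.add_sub_cancel] at hpascal
  calc (m + 1) * (m + 1).choose (s + 1)
      ≤ (m + 1) * (f'.choose (s + 1) + (m + 1 - f') * m.choose s) := Nat.mul_le_mul_left _ hpascal
    _ = (m + 1) * f'.choose (s + 1) + (s + 1) * (m + 1 - f') * (m + 1).choose (s + 1) := by
      rw [mul_add, mul_left_comm, hsymm]; ring

theorem one_sub_mul_choose_le_choose {f' f s : ℕ} {ε : ℝ} (hε : 0 ≤ ε) (h : f' ≤ f)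
    (hd : ((f - f' : ℕ) : ℝ) * s ≤ ε * f) :
    (1 - ε) * f.choose s ≤ f'.choose s := by
  rcases Nat.eq_zero_or_pos f with rfl | hf
  · obtain rfl : f' = 0 := Nat.le_zero.mp h
    nlinarith [(Nat.choose 0 s).cast_nonneg (α := ℝ)]
  have key : (f : ℝ) * f.choose s ≤ f * f'.choose s + s * (f - f' : ℕ) * f.choose s := by
    exact_mod_cast mul_choose_le_mul_choose_add s h
  have hC : (0 : ℝ) ≤ f.choose s := by positivity
  have hfR : (0 : ℝ) < f := by exact_mod_cast hf
  refine le_of_mul_le_mul_left ?_ hfR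
  nlinarith [mul_le_mul_of_nonneg_right hd hC]

theorem card_mul_card_le_sum_sum {R α β : Type*} [Semiring R] [PartialOrder R] [IsOrderedRing R]
    {A A' : Finset α} {B B' : Finset β} {g : α → β → R} (hA : A' ⊆ A) (hB : B' ⊆ B)
    (hg : ∀ a b, 0 ≤ g a b) (h1 : ∀ a ∈ A', ∀ b ∈ B', 1 ≤ g a b) :
    (#A' * #B' : R) ≤ ∑ a ∈ A, ∑ b ∈ B, g a b :=
  calc (#A' * #B' : R) = ∑ _a ∈ A', ∑ _b ∈ B', 1 := by simp
    _ ≤ ∑ a ∈ A', ∑ b ∈ B', g a b := sum_le_sum fun a ha => sum_le_sum fun b hb => h1 a ha b hb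
    _ ≤ ∑ a ∈ A', ∑ b ∈ B, g a b :=
      sum_le_sum fun a _ => sum_le_sum_of_subset_of_nonneg hB fun b _ _ => hg a b
    _ ≤ ∑ a ∈ A, ∑ b ∈ B, g a b :=
      sum_le_sum_of_subset_of_nonneg hA fun a _ _ => sum_nonneg fun b _ => hg a b

/-- Closeness lemma for decision trees. `X` is the subcube of `{0,1}^n` with free
coordinates `F` (coordinates outside `F` fixed to `z`), `X' ⊆ X` a subcube with free
coordinates `F' ⊆ F` (coordinates outside `F'` fixed to `z'`), `|F| ≥ 0.1n` and
`|F ∖ F'| ≤ δ√n`, where `s = √n`. The sprinkled-1s distribution `σ` samples `u`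
uniform in `X` and a uniformly random `s`-subset `I` of `F` and sets coordinates in
`I` to `1`. Then `Pr_{x∼σ}[x ∈ X'] ≥ (1 - 10δ)·Pr_{u∼X}[u ∈ X']`. -/
theorem stmt10 (n s : ℕ) (hs : s * s = n) (δ : ℝ) (hδ : 0 ≤ δ)
    (F F' : Finset (Fin n)) (hFF : F' ⊆ F) (hsF : s ≤ F.card)
    (hF : (n : ℝ) ≤ 10 * F.card)
    (z z' : Fin n → Bool)
    (hdiff : ((F \ F').card : ℝ) ≤ δ * s) :
    let X : Finset (Fin n → Bool) :=
      Finset.univ.filter (fun x => ∀ i ∉ F, x i = z i)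
    let X' : Finset (Fin n → Bool) :=
      Finset.univ.filter (fun x => ∀ i ∉ F', x i = z' i)
    X' ⊆ X →
    (1 - 10 * δ) * ((X'.card : ℝ) / (X.card : ℝ)) ≤
      (∑ u ∈ X, ∑ I ∈ F.powersetCard s,
          (if (fun i => if i ∈ I then true else u i) ∈ X' then (1 : ℝ) else 0)) /
        ((X.card : ℝ) * ((F.powersetCard s).card : ℝ)) := by
  intro X X' hXX'
  have hX : (0 : ℝ) < #X := by
    exact_mod_cast card_pos.mpr ⟨z, by simp [X]⟩
  have hP : (0 : ℝ) < #(F.powersetCard s) := by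
    rw [card_powersetCard]; exact_mod_cast Nat.choose_pos hsF
  -- Sprinkling inside `F'` never leaves `X'`.
  have hgood := card_mul_card_le_sum_sum hXX' (powersetCard_mono (n := s) hFF)
    (g := fun u I => if (fun i => if i ∈ I then true else u i) ∈ X' then (1 : ℝ) else 0)
    (fun _ _ => by positivity) fun u hu I hI => by
      have hIF' := (mem_powersetCard.mp hI).1
      refine (if_pos ?_).ge
      simp only [X', mem_filter, mem_univ, true_and] at hu ⊢
      intro i hi
      rw [if_neg fun h => hi (hIF' h)]
      exact hu i hi
  have hchoose : (1 - 10 * δ) * #(F.powersetCard s) ≤ (#(F'.powersetCard s) : ℝ) := by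
    simp only [card_powersetCard]
    refine one_sub_mul_choose_le_choose (by positivity) (card_le_card hFF) ?_
    rw [← card_sdiff_of_subset hFF]
    have hsn : (s : ℝ) * s = n := by exact_mod_cast hs
    nlinarith [mul_le_mul_of_nonneg_right hdiff (s.cast_nonneg (α := ℝ))]
  rw [le_div_iff₀ (by positivity)]
  calc (1 - 10 * δ) * ((#X' : ℝ) / #X) * (#X * #(F.powersetCard s))
      = #X' * ((1 - 10 * δ) * #(F.powersetCard s)) := by field_simp
    _ ≤ #X' * #(F'.powersetCard s) := by gcongr
    _ ≤ _ := hgood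
end

section
/- Deficit growth under a communication protocol: let X × Y ⊆ Σ^n × Σ^n be a rectangle, F ⊆ [n], and Π a deterministic protocol of communication cost d whose leaves partition X × Y into subrectangles. For (x,y) uniform in X × Y, with probability at least 1 - 2ε the leaf rectangle L containing (x,y) satisfies D(L,F) ≤ D(X×Y,F) + 2d + 2·log(1/ε), where D(A×B,F) := 2|F|m - H_∞(a_F) - H_∞(b_F) for (a,b) uniform in A×B. -/
open Classical

/-- Largest number of elements of `A` agreeing with a single assignment on `F`. -/
noncomputable def projMaxCard (n m : ℕ) (A : Finset (Fin n → Fin m → Bool))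
    (F : Finset (Fin n)) : ℕ :=
  Finset.univ.sup (fun z : Fin n → Fin m → Bool =>
    (A.filter (fun a => ∀ i ∈ F, a i = z i)).card)

/-- Min-entropy of the projection to `F` of the uniform distribution on `A`. -/
noncomputable def minEntU (n m : ℕ) (A : Finset (Fin n → Fin m → Bool))
    (F : Finset (Fin n)) : ℝ :=
  - Real.logb 2 ((projMaxCard n m A F : ℝ) / (A.card : ℝ))

/-- Deficit of the rectangle `A × B` with respect to `F`:
`D(A×B,F) = 2|F|m - H_∞(a_F) - H_∞(b_F)` for `(a,b) ∼ unif(A×B)`. -/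
noncomputable def deficitRect (n m : ℕ) (A B : Finset (Fin n → Fin m → Bool))
    (F : Finset (Fin n)) : ℝ :=
  2 * (F.card : ℝ) * m - minEntU n m A F - minEntU n m B F

/-!
A leaf `A × B` that is not too small (`|A| ≥ δ|X|`, `|B| ≥ δ|Y|` with `δ = ε / 2^d`) has
conditional min-entropy on `F` at most `log₂ (1/δ) = d + log₂ (1/ε)` below that of `X`, resp. `Y`:
conditioning on an event of probability `δ` raises the largest point probability of `x_F`
by at most the factor `1/δ`. Every small leaf has at most `δ |X| |Y|` points, and there are at most
`2^d` leaves, so the small leaves cover at most an `ε`-fraction of `X × Y`.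
-/

open Finset

section MinEntropy

variable {n m : ℕ}

lemma projMaxCard_mono {A X : Finset (Fin n → Fin m → Bool)} (hAX : A ⊆ X)
    (F : Finset (Fin n)) : projMaxCard n m A F ≤ projMaxCard n m X F :=
  sup_mono_fun fun _ _ => card_le_card (filter_subset_filter _ hAX)

lemma projMaxCard_pos {A : Finset (Fin n → Fin m → Bool)} (hA : A.Nonempty)
    (F : Finset (Fin n)) : 0 < projMaxCard n m A F := by
  obtain ⟨a, ha⟩ := hA
  have hmem : a ∈ A.filter (fun x => ∀ i ∈ F, x i = a i) := mem_filter.mpr ⟨ha, fun _ _ => rfl⟩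
  exact (card_pos.mpr ⟨a, hmem⟩).trans_le
    (le_sup (f := fun z => (A.filter (fun x => ∀ i ∈ F, x i = z i)).card) (mem_univ a))

lemma minEntU_sub_le_logb_card_div {A X : Finset (Fin n → Fin m → Bool)} (hAX : A ⊆ X)
    (hA : A.Nonempty) (F : Finset (Fin n)) :
    minEntU n m X F - minEntU n m A F ≤ Real.logb 2 ((X.card : ℝ) / A.card) := by
  have hpA : (0 : ℝ) < projMaxCard n m A F := by exact_mod_cast projMaxCard_pos hA F
  have hpAX : (projMaxCard n m A F : ℝ) ≤ projMaxCard n m X F := by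
    exact_mod_cast projMaxCard_mono hAX F
  have hcA : (0 : ℝ) < A.card := by exact_mod_cast hA.card_pos
  have hcX : (0 : ℝ) < X.card := by exact_mod_cast (hA.mono hAX).card_pos
  have hpX : (0 : ℝ) < projMaxCard n m X F := hpA.trans_le hpAX
  have hsplit : (projMaxCard n m A F : ℝ) / A.card =
      projMaxCard n m A F / projMaxCard n m X F * ((projMaxCard n m X F : ℝ) / X.card) *
        ((X.card : ℝ) / A.card) := by
    field_simp
  have hratio : Real.logb 2 ((projMaxCard n m A F : ℝ) / projMaxCard n m X F) ≤ 0 :=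
    Real.logb_nonpos one_lt_two (by positivity) (div_le_one_of_le₀ hpAX (by positivity))
  rw [minEntU, minEntU, hsplit, Real.logb_mul (by positivity) (by positivity),
    Real.logb_mul (by positivity) (by positivity)]
  linarith

lemma minEntU_sub_le_of_card_ge {δ : ℝ} (hδ : 0 < δ) {A X : Finset (Fin n → Fin m → Bool)}
    (hAX : A ⊆ X) (hX : X.Nonempty) (hA : δ * X.card ≤ A.card) (F : Finset (Fin n)) :
    minEntU n m X F - minEntU n m A F ≤ Real.logb 2 (1 / δ) := by
  have hcX : (0 : ℝ) < X.card := by exact_mod_cast hX.card_pos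
  have hcA : (0 : ℝ) < A.card := (by positivity : 0 < δ * X.card).trans_le hA
  refine (minEntU_sub_le_logb_card_div hAX (card_pos.mp (by exact_mod_cast hcA)) F).trans ?_
  refine Real.logb_le_logb_of_le one_lt_two (by positivity) ?_
  rw [div_le_div_iff₀ hcA hδ]
  linarith

lemma deficitRect_le_of_card_ge {δ : ℝ} (hδ : 0 < δ)
    {A B X Y : Finset (Fin n → Fin m → Bool)} (hAX : A ⊆ X) (hBY : B ⊆ Y)
    (hX : X.Nonempty) (hY : Y.Nonempty) (hA : δ * X.card ≤ A.card) (hB : δ * Y.card ≤ B.card)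
    (F : Finset (Fin n)) :
    deficitRect n m A B F ≤ deficitRect n m X Y F + 2 * Real.logb 2 (1 / δ) := by
  have hXA := minEntU_sub_le_of_card_ge hδ hAX hX hA F
  have hYB := minEntU_sub_le_of_card_ge hδ hBY hY hB F
  unfold deficitRect
  linarith

end MinEntropy

section UnionBound

variable {α β : Type*} {X : Finset α} {Y : Finset β} {δ : ℝ}

lemma card_product_le_of_not_large {A : Finset α} {B : Finset β} (hAX : A ⊆ X) (hBY : B ⊆ Y)
    (hsmall : ¬ (δ * X.card ≤ A.card ∧ δ * Y.card ≤ B.card)) :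
    ((A ×ˢ B).card : ℝ) ≤ δ * X.card * Y.card := by
  have hAle : (A.card : ℝ) ≤ X.card := by exact_mod_cast card_le_card hAX
  have hBle : (B.card : ℝ) ≤ Y.card := by exact_mod_cast card_le_card hBY
  rw [card_product, Nat.cast_mul]
  rcases not_and_or.mp hsmall with h | h <;> replace h := (not_le.mp h).le
  · exact mul_le_mul h hBle (by positivity) ((Nat.cast_nonneg _).trans h)
  · calc (A.card : ℝ) * B.card ≤ X.card * (δ * Y.card) :=
          mul_le_mul hAle h (by positivity) (by positivity)
      _ = δ * X.card * Y.card := by ring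

lemma card_biUnion_small_rectangles_le [DecidableEq α] [DecidableEq β] {ι : Type*} [Fintype ι]
    (hδ : 0 ≤ δ)
    (A : ι → Finset α) (B : ι → Finset β) (hAX : ∀ t, A t ⊆ X) (hBY : ∀ t, B t ⊆ Y) :
    (((univ.filter fun t => ¬ (δ * X.card ≤ (A t).card ∧ δ * Y.card ≤ (B t).card)).biUnion
        fun t => A t ×ˢ B t).card : ℝ) ≤ Fintype.card ι * (δ * X.card * Y.card) := by
  set small := univ.filter fun t => ¬ (δ * X.card ≤ (A t).card ∧ δ * Y.card ≤ (B t).card)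
  calc ((small.biUnion fun t => A t ×ˢ B t).card : ℝ)
      ≤ ∑ t ∈ small, ((A t ×ˢ B t).card : ℝ) := by exact_mod_cast card_biUnion_le
    _ ≤ ∑ _t ∈ small, δ * X.card * Y.card :=
        sum_le_sum fun t ht => card_product_le_of_not_large (hAX t) (hBY t) (mem_filter.mp ht).2
    _ = small.card * (δ * X.card * Y.card) := by rw [sum_const, nsmul_eq_mul]
    _ ≤ Fintype.card ι * (δ * X.card * Y.card) := by
        gcongr
        exact card_le_univ small

end UnionBound

lemma one_sub_le_card_filter_div {α : Type*} {s : Finset α} (hs : s.Nonempty) {P : α → Prop}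
    [DecidablePred P] {ε : ℝ} (hbad : ((s.filter fun a => ¬ P a).card : ℝ) ≤ ε * s.card) :
    1 - ε ≤ ((s.filter P).card : ℝ) / s.card := by
  have hs' : (0 : ℝ) < s.card := by exact_mod_cast hs.card_pos
  have hsplit : ((s.filter P).card : ℝ) + (s.filter fun a => ¬ P a).card = s.card := by
    exact_mod_cast card_filter_add_card_filter_not P
  rw [le_div_iff₀ hs']
  linarith

theorem stmt14_general (n m d : ℕ) (ε : ℝ) (hε : 0 < ε)
    (X Y : Finset (Fin n → Fin m → Bool)) (hX : X.Nonempty) (hY : Y.Nonempty)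
    (F : Finset (Fin n))
    (A B : (Fin d → Bool) → Finset (Fin n → Fin m → Bool))
    (hAX : ∀ t, A t ⊆ X) (hBY : ∀ t, B t ⊆ Y) :
    1 - 2 * ε ≤
      (((X ×ˢ Y).filter (fun p => ∀ t, p.1 ∈ A t → p.2 ∈ B t →
          deficitRect n m (A t) (B t) F ≤
            deficitRect n m X Y F + 2 * d + 2 * Real.logb 2 (1 / ε))).card : ℝ) /
        (((X ×ˢ Y).card : ℝ)) := by
  set δ := ε / 2 ^ d
  have hδ : 0 < δ := by positivity
  have hlogδ : Real.logb 2 (1 / δ) = d + Real.logb 2 (1 / ε) := by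
    rw [one_div_div, Real.logb_div (by positivity) hε.ne', Real.logb_pow,
      Real.logb_self_eq_one one_lt_two, one_div, Real.logb_inv]
    ring
  refine le_trans (by linarith) (one_sub_le_card_filter_div (hX.product hY) (ε := ε) ?_)
  refine (Nat.cast_le.mpr (card_le_card ?_)).trans
    ((card_biUnion_small_rectangles_le hδ.le A B hAX hBY).trans_eq ?_)
  · intro p hp
    obtain ⟨t, hpA, hpB, hfar⟩ := by simpa only [not_forall] using (mem_filter.mp hp).2
    refine mem_biUnion.mpr ⟨t, mem_filter.mpr ⟨mem_univ t, fun ⟨hA, hB⟩ => hfar ?_⟩,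
      mem_product.mpr ⟨hpA, hpB⟩⟩
    have := deficitRect_le_of_card_ge hδ (hAX t) (hBY t) hX hY hA hB F
    rw [hlogδ] at this
    linarith
  · simp only [Fintype.card_fun, Fintype.card_bool, Fintype.card_fin, card_product, δ]
    push_cast
    field_simp

/-- Deficit growth under a deterministic communication protocol of cost `d`: the
leaves, indexed by transcripts in `{0,1}^d`, are rectangles `A t × B t` partitioning
`X × Y`. For `(x,y)` uniform in `X × Y`, with probability at least `1 - 2ε` the leaf
rectangle containing `(x,y)` satisfies
`D(L,F) ≤ D(X×Y,F) + 2d + 2·log₂(1/ε)`. -/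
theorem stmt14 (n m d : ℕ) (ε : ℝ) (hε : 0 < ε)
    (X Y : Finset (Fin n → Fin m → Bool)) (hX : X.Nonempty) (hY : Y.Nonempty)
    (F : Finset (Fin n))
    (A B : (Fin d → Bool) → Finset (Fin n → Fin m → Bool))
    (hAX : ∀ t, A t ⊆ X) (hBY : ∀ t, B t ⊆ Y)
    (hpart : ∀ p ∈ X ×ˢ Y, ∃! t, p.1 ∈ A t ∧ p.2 ∈ B t) :
    1 - 2 * ε ≤
      (((X ×ˢ Y).filter (fun p => ∀ t, p.1 ∈ A t → p.2 ∈ B t →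
          deficitRect n m (A t) (B t) F ≤
            deficitRect n m X Y F + 2 * d + 2 * Real.logb 2 (1 / ε))).card : ℝ) /
        (((X ×ˢ Y).card : ℝ)) :=
  stmt14_general n m d ε hε X Y hX hY F A B hAX hBY
end
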